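/- For each m ∈ {1,2,3}: every vector of the form c^j • R_m (j = 0,…,4) lies on the Clebsch cone, i.e. ∑ i, (c^j • R_m) i = 0 and ∑ i, ((c^j • R_m) i)³ = 0; the five vectors c⁰ • R_m, …, c⁴ • R_m are pairwise non-proportional; for every g ∈ G₂₀ and every j ∈ {0,…,4} there exist j' ∈ {0,…,4} and λ ∈ ℂ, λ ≠ 0, with g • (c^j • R_m) = λ • (c^{j'} • R_m); and for m ≠ m' no c^j • R_m is a scalar multiple of any c^{j'} • R_{m'}. (Hence the sets 𝒪_m = {c^j • R_m : j}, m = 1,2,3, are three distinct G₂₀-orbits of length 5 of projective points on the Clebsch cubic surface.) -/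

import Mathlib

/-- The 5-cycle `(0 1 2 3 4)` on `Fin 5`, sending `i` to `i + 1 (mod 5)`. -/
def c : Equiv.Perm (Fin 5) := finRotate 5

/-- The 4-cycle `(1 2 4 3)` on `Fin 5`, fixing `0`. -/
def d : Equiv.Perm (Fin 5) := ([1, 2, 4, 3] : List (Fin 5)).formPerm

/-- The group `G₂₀ ≅ C₅ ⋊ C₄` generated by `c` and `d`. -/
def G₂₀ : Subgroup (Equiv.Perm (Fin 5)) := Subgroup.closure {c, d}

/-- The linear action of a permutation `g` on vectors: `(g • v) i = v (g⁻¹ i)`. -/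
def permSMul (g : Equiv.Perm (Fin 5)) (v : Fin 5 → ℂ) : Fin 5 → ℂ := fun i => v (g⁻¹ i)

def R₁ : Fin 5 → ℂ := ![0, -1, 1, 1, -1]
def R₂ : Fin 5 → ℂ := ![0, -Complex.I, -1, 1, Complex.I]
def R₃ : Fin 5 → ℂ := ![0, Complex.I, -1, 1, -Complex.I]

/-- The three base points `R₁, R₂, R₃` of the three orbits of length 5. -/
def R : Fin 3 → Fin 5 → ℂ := ![R₁, R₂, R₃]

/-!
Each `R m` vanishes exactly at the coordinate `0`, so `c ^ j • R m` vanishes exactly at `j`: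
two of them with different `j` are not proportional, and for equal `j` the three `R m` are told
apart after normalising the coordinate `3` to `1`. Every `R m` is an eigenvector of `d`, and
`d c d⁻¹ = c²`, so `d` maps `c ^ j • R m` to a multiple of `c ^ (2 j) • R m`; as `c` permutes these
lines too, so does the finite group `G₂₀` they generate. The two Clebsch equations
are permutation invariant and are checked on `R m` directly.
-/

open Fin.NatCast

theorem finRotate_pow_apply {n : ℕ} [NeZero n] (k : ℕ) (i : Fin n) :
    (finRotate n ^ k) i = i + k := by
  induction k generalizing i with
  | zero => simp
  | succ k ih =>
    rw [pow_succ, Equiv.Perm.mul_apply, finRotate_apply, ih]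
    push_cast
    abel

theorem finRotate_pow_inv_apply {n : ℕ} [NeZero n] (k : ℕ) (i : Fin n) :
    (finRotate n ^ k)⁻¹ i = i - k := by
  rw [Equiv.Perm.inv_eq_iff_eq, finRotate_pow_apply, sub_add_cancel]

theorem permSMul_one (v : Fin 5 → ℂ) : permSMul 1 v = v := rfl

theorem permSMul_mul (g h : Equiv.Perm (Fin 5)) (v : Fin 5 → ℂ) :
    permSMul (g * h) v = permSMul g (permSMul h v) := by
  funext i
  simp [permSMul, mul_inv_rev]

theorem permSMul_smul (g : Equiv.Perm (Fin 5)) (lam : ℂ) (v : Fin 5 → ℂ) :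
    permSMul g (lam • v) = lam • permSMul g v := rfl

theorem permSMul_injective (g : Equiv.Perm (Fin 5)) : Function.Injective (permSMul g) := by
  intro v w h
  simpa [← permSMul_mul, permSMul_one] using congrArg (permSMul g⁻¹) h

theorem sum_comp_permSMul {M : Type*} [AddCommMonoid M] (g : Equiv.Perm (Fin 5))
    (v : Fin 5 → ℂ) (f : ℂ → M) : ∑ i, f (permSMul g v i) = ∑ i, f (v i) :=
  Equiv.sum_comp g⁻¹ (f ∘ v)

theorem permSMul_c_pow_apply (k : ℕ) (v : Fin 5 → ℂ) (i : Fin 5) :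
    permSMul (c ^ k) v i = v (i - k) :=
  congrArg v (finRotate_pow_inv_apply k i)

theorem c_pow_five : c ^ 5 = 1 := by decide

theorem exists_c_pow_fin_eq (k : ℕ) : ∃ j : Fin 5, c ^ (j : ℕ) = c ^ k :=
  ⟨k, by rw [Fin.val_natCast, ← pow_eq_pow_mod k c_pow_five]⟩

theorem permSMul_d (v : Fin 5 → ℂ) : permSMul d v = ![v 0, v 3, v 1, v 4, v 2] := by
  funext i
  fin_cases i <;> rfl

theorem d_mul_c_pow (k : ℕ) : d * c ^ k = c ^ (2 * k) * d := by
  rw [pow_mul]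
  exact SemiconjBy.pow_right (by decide : d * c = c ^ 2 * d) k

def shiftOrbitStabilizer (v : Fin 5 → ℂ) : Submonoid (Equiv.Perm (Fin 5)) where
  carrier := {g | ∀ j : Fin 5, ∃ j' : Fin 5, ∃ lam : ℂ, lam ≠ 0 ∧
    permSMul g (permSMul (c ^ (j : ℕ)) v) = lam • permSMul (c ^ (j' : ℕ)) v}
  one_mem' j := ⟨j, 1, one_ne_zero, by rw [permSMul_one, one_smul]⟩
  mul_mem' {g h} hg hh j := by
    obtain ⟨j₁, lam₁, hlam₁, h₁⟩ := hh j
    obtain ⟨j₂, lam₂, hlam₂, h₂⟩ := hg j₁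
    refine ⟨j₂, lam₂ * lam₁, mul_ne_zero hlam₂ hlam₁, ?_⟩
    rw [permSMul_mul, h₁, permSMul_smul, h₂, smul_smul, mul_comm]

theorem c_mem_shiftOrbitStabilizer (v : Fin 5 → ℂ) : c ∈ shiftOrbitStabilizer v := by
  intro j
  obtain ⟨j', hj'⟩ := exists_c_pow_fin_eq (j + 1)
  exact ⟨j', 1, one_ne_zero, by rw [← permSMul_mul, hj', one_smul, pow_succ']⟩

theorem d_mem_shiftOrbitStabilizer {v : Fin 5 → ℂ} {lam : ℂ} (hlam : lam ≠ 0)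
    (hv : permSMul d v = lam • v) : d ∈ shiftOrbitStabilizer v := by
  intro j
  obtain ⟨j', hj'⟩ := exists_c_pow_fin_eq (2 * j)
  refine ⟨j', lam, hlam, ?_⟩
  rw [← permSMul_mul, d_mul_c_pow, permSMul_mul, hv, permSMul_smul, hj']

theorem G₂₀_le_shiftOrbitStabilizer {v : Fin 5 → ℂ} {lam : ℂ} (hlam : lam ≠ 0)
    (hv : permSMul d v = lam • v) : G₂₀.toSubmonoid ≤ shiftOrbitStabilizer v := by
  rw [G₂₀, Subgroup.closure_toSubmonoid_of_finite, Submonoid.closure_le]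
  rintro g (rfl | rfl)
  exacts [c_mem_shiftOrbitStabilizer v, d_mem_shiftOrbitStabilizer hlam hv]

theorem permSMul_c_pow_ne_smul_of_ne {v w : Fin 5 → ℂ} (hv : v ≠ 0) (hv₀ : v 0 = 0)
    (hw : ∀ i, i ≠ 0 → w i ≠ 0) {j j' : Fin 5} (hj : j ≠ j') (lam : ℂ) :
    permSMul (c ^ (j : ℕ)) v ≠ lam • permSMul (c ^ (j' : ℕ)) w := by
  intro h
  have hj₀ : lam * w (j - j') = 0 := by
    simpa [permSMul_c_pow_apply, hv₀, eq_comm] using congrFun h j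
  obtain rfl : lam = 0 := (mul_eq_zero.mp hj₀).resolve_right (hw _ (sub_ne_zero.mpr hj))
  exact hv (permSMul_injective _ (by rw [h, zero_smul]; rfl))

theorem R_apply_zero (m : Fin 3) : R m 0 = 0 := by
  fin_cases m <;> rfl

theorem R_apply_three (m : Fin 3) : R m 3 = 1 := by
  fin_cases m <;> rfl

theorem R_ne_zero (m : Fin 3) : R m ≠ 0 := fun h => by
  simpa [R_apply_three] using congrFun h 3

theorem R_apply_ne_zero (m : Fin 3) {i : Fin 5} (hi : i ≠ 0) : R m i ≠ 0 := by
  fin_cases m <;> fin_cases i <;> simp_all [R, R₁, R₂, R₃]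

theorem R_injective : Function.Injective R := by
  intro m m' h
  have h₁ := congrFun h 1
  fin_cases m <;> fin_cases m' <;> first | rfl | norm_num [R, R₁, R₂, R₃, Complex.ext_iff] at h₁

theorem sum_R (m : Fin 3) : ∑ i, R m i = 0 := by
  fin_cases m <;> simp [R, R₁, R₂, R₃, Fin.sum_univ_five]

theorem sum_R_pow_three (m : Fin 3) : ∑ i, R m i ^ 3 = 0 := by
  fin_cases m <;> simp [R, R₁, R₂, R₃, Fin.sum_univ_five] <;> ring_nf <;> simp

theorem permSMul_d_R (m : Fin 3) : permSMul d (R m) = ![-1, Complex.I, -Complex.I] m • R m := by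
  rw [permSMul_d]
  funext i
  fin_cases m <;> fin_cases i <;> simp [R, R₁, R₂, R₃]

theorem R_eigenvalue_ne_zero (m : Fin 3) : ![-1, Complex.I, -Complex.I] m ≠ 0 := by
  fin_cases m <;> simp

theorem permSMul_R_ne_smul (g : Equiv.Perm (Fin 5)) {m m' : Fin 3} (hm : m ≠ m') (lam : ℂ) :
    permSMul g (R m) ≠ lam • permSMul g (R m') := by
  rw [← permSMul_smul]
  intro h
  have h' := permSMul_injective g h
  obtain rfl : lam = 1 := by simpa [R_apply_three] using (congrFun h' 3).symm
  exact hm (R_injective (by simpa using h'))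

theorem permSMul_c_pow_R_not_proportional {m m' : Fin 3} {j j' : Fin 5} (h : m ≠ m' ∨ j ≠ j') :
    ¬ ∃ lam : ℂ, permSMul (c ^ (j : ℕ)) (R m) = lam • permSMul (c ^ (j' : ℕ)) (R m') := by
  rintro ⟨lam, hlam⟩
  obtain rfl | hj := eq_or_ne j j'
  · exact permSMul_R_ne_smul _ (h.resolve_right (not_not.mpr rfl)) lam hlam
  · exact permSMul_c_pow_ne_smul_of_ne (R_ne_zero m) (R_apply_zero m)
      (fun _ => R_apply_ne_zero m') hj lam hlam

theorem stmt3 :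
    (∀ m : Fin 3, ∀ j : Fin 5,
      (∑ i, permSMul (c ^ (j : ℕ)) (R m) i) = 0 ∧
      (∑ i, (permSMul (c ^ (j : ℕ)) (R m) i) ^ 3) = 0) ∧
    (∀ m : Fin 3, ∀ j j' : Fin 5, j ≠ j' →
      ¬ ∃ lam : ℂ, permSMul (c ^ (j : ℕ)) (R m) = lam • permSMul (c ^ (j' : ℕ)) (R m)) ∧
    (∀ m : Fin 3, ∀ g ∈ G₂₀, ∀ j : Fin 5, ∃ j' : Fin 5, ∃ lam : ℂ, lam ≠ 0 ∧
      permSMul g (permSMul (c ^ (j : ℕ)) (R m)) = lam • permSMul (c ^ (j' : ℕ)) (R m)) ∧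
    (∀ m m' : Fin 3, m ≠ m' → ∀ j j' : Fin 5,
      ¬ ∃ lam : ℂ, permSMul (c ^ (j : ℕ)) (R m) = lam • permSMul (c ^ (j' : ℕ)) (R m')) := by
  refine ⟨fun m j => ⟨?_, ?_⟩, fun m j j' hj => permSMul_c_pow_R_not_proportional (.inr hj),
    fun m g hg => G₂₀_le_shiftOrbitStabilizer (R_eigenvalue_ne_zero m) (permSMul_d_R m) hg,
    fun m m' hm j j' => permSMul_c_pow_R_not_proportional (.inl hm)⟩
  · exact (sum_comp_permSMul _ _ id).trans (sum_R m)
  · exact (sum_comp_permSMul _ _ (· ^ 3)).trans (sum_R_pow_three m)
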